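/- On the open set Ω = {(b,c,d) ∈ ℝ³ : b < c < d}, let χ(b,c,d) := (d−c)/(d−b) ∈ (0,1) and define m(b,c,d) := (d−c)^{−1/2}·χ(b,c,d)^{−1/2}·B(χ(b,c,d)). Then m is twice continuously differentiable on Ω and satisfies the partial differential equation −(1/(d−b)²)·m + (2/(c−b))·∂m/∂c + (2/(d−b))·∂m/∂d − (8/3)·(1/(b−c))·∂m/∂b + (8/3)·∂²m/∂b² = 0 at every point of Ω. -/

import Mathlib

/-- `B(χ) := ∫_{1−χ}^1 ζ^{1/2} (ζ−1+χ)^{−1/4} (1−ζ)^{−1/4} dζ`. -/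
noncomputable def Bint (χ : ℝ) : ℝ :=
  ∫ ζ in (1 - χ)..1, ζ ^ ((1/2) : ℝ) * (ζ - 1 + χ) ^ (-(1/4) : ℝ) * (1 - ζ) ^ (-(1/4) : ℝ)

/-- m(b,c,d) = (d-c)^(-1/2) chi^(-1/2) B(chi) with chi = (d-c)/(d-b). -/
noncomputable def mB (b c d : ℝ) : ℝ :=
  (d - c) ^ (-(1/2) : ℝ) * ((d - c) / (d - b)) ^ (-(1/2) : ℝ) * Bint ((d - c) / (d - b))


/-! The substitution `ζ = 1 - χ s` turns `B(χ)` into `χ^{1/2} F(χ)`, where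
`F(χ) = ∫₀¹ (1 - χ s)^{1/2} s^{-1/4} (1 - s)^{-1/4} ds` is Euler's integral for the hypergeometric
function `₂F₁(-1/2, 3/4; 3/2; χ)`, so `m = (d - c)^{-1/2} F(χ)`. Differentiating under the integral
sign shows that `F` is smooth on `χ < 1`, and `F` solves the hypergeometric equation
`χ(1-χ)F'' + (3/2 - 5χ/4)F' + 3F/8 = 0` because the corresponding combination of integrands is the
`s`-derivative of `s^{3/4}(1-s)^{3/4}(1-χs)^{-1/2}/2`, which vanishes at `s = 0` and `s = 1`. By the
chain rule, the differential operator of the PDE applied to `(d - c)^{-1/2} F(χ)` is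
`(8/3)(d-c)^{1/2} / ((d-b)²(c-b))` times the hypergeometric operator applied to `F`. -/

open MeasureTheory Real Set Filter Topology
open scoped Interval ContDiff

noncomputable section

def betaWeight (s : ℝ) : ℝ := s ^ (-(1/4) : ℝ) * (1 - s) ^ (-(1/4) : ℝ)

def eulerIntegral (g : ℝ → ℝ) (p χ : ℝ) : ℝ :=
  ∫ s in (0:ℝ)..1, g s * (1 - χ * s) ^ p * betaWeight s

def eulerF : ℝ → ℝ := eulerIntegral (fun _ => 1) (1/2)

end

lemma betaWeight_nonneg {s : ℝ} (hs0 : 0 ≤ s) (hs1 : s ≤ 1) : 0 ≤ betaWeight s :=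
  mul_nonneg (rpow_nonneg hs0 _) (rpow_nonneg (sub_nonneg.2 hs1) _)

lemma betaWeight_le {s : ℝ} (hs0 : 0 ≤ s) (hs1 : s ≤ 1) :
    2 * betaWeight s ≤ s ^ (-(1/2) : ℝ) + (1 - s) ^ (-(1/2) : ℝ) := by
  have hsq {x : ℝ} (hx : 0 ≤ x) : (x ^ (-(1/4) : ℝ)) ^ 2 = x ^ (-(1/2) : ℝ) := by
    rw [← rpow_natCast, ← rpow_mul hx]
    norm_num
  rw [betaWeight, ← mul_assoc, ← hsq hs0, ← hsq (sub_nonneg.2 hs1)]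
  exact two_mul_le_add_sq _ _

lemma intervalIntegrable_betaWeight : IntervalIntegrable betaWeight volume 0 1 := by
  have hsing : IntervalIntegrable (fun s : ℝ => s ^ (-(1/2) : ℝ) + (1 - s) ^ (-(1/2) : ℝ))
      volume 0 1 := by
    have h := intervalIntegral.intervalIntegrable_rpow' (a := 0) (b := 1) (r := -(1/2))
      (by norm_num)
    exact h.add (by simpa using (h.comp_sub_left 1).symm)
  refine (hsing.const_mul (1/2)).mono_fun' (by unfold betaWeight; fun_prop) ?_
  filter_upwards [ae_restrict_mem measurableSet_uIoc] with s hs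
  rw [uIoc_of_le zero_le_one] at hs
  have := betaWeight_le hs.1.le hs.2
  rw [norm_of_nonneg (betaWeight_nonneg hs.1.le hs.2)]
  linarith

lemma one_sub_mul_pos {χ s : ℝ} (hχ : χ < 1) (hs : s ∈ Icc (0:ℝ) 1) : 0 < 1 - χ * s := by
  obtain ⟨hs0, hs1⟩ := hs
  rcases le_or_gt 0 χ with h | h <;> nlinarith

lemma intervalIntegrable_eulerIntegrand {g : ℝ → ℝ} (hg : Continuous g) (p : ℝ) {χ : ℝ}
    (hχ : χ < 1) :
    IntervalIntegrable (fun s => g s * (1 - χ * s) ^ p * betaWeight s) volume 0 1 := by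
  refine intervalIntegrable_betaWeight.continuousOn_mul ?_
  rw [uIcc_of_le zero_le_one]
  exact hg.continuousOn.mul <|
    (continuousOn_const.sub (continuousOn_const.mul continuousOn_id)).rpow_const
      fun s hs => Or.inl (one_sub_mul_pos hχ hs).ne'

lemma hasDerivAt_eulerIntegral {g : ℝ → ℝ} (hg : Continuous g) (p : ℝ) {χ₀ : ℝ}
    (hχ₀ : χ₀ < 1) :
    HasDerivAt (eulerIntegral g p) (eulerIntegral (fun s => -p * s * g s) (p - 1) χ₀) χ₀ := by
  set r := (1 - χ₀) / 2 with hr_def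
  have hr : 0 < r := by linarith
  have hball : Metric.closedBall χ₀ r ⊆ Iio 1 := fun χ hχ => by
    have := (abs_le.1 (Real.dist_eq χ χ₀ ▸ Metric.mem_closedBall.1 hχ)).2
    simp only [mem_Iio]; linarith
  obtain ⟨C, hC⟩ := ((isCompact_closedBall χ₀ r).prod isCompact_Icc).exists_bound_of_continuousOn
    (f := fun q : ℝ × ℝ => -p * q.2 * g q.2 * (1 - q.1 * q.2) ^ (p - 1)) <| by
      refine ((continuous_const.mul continuous_snd).mul (hg.comp continuous_snd)).continuousOn.mul
        ((continuous_const.sub (continuous_fst.mul continuous_snd)).continuousOn.rpow_const ?_)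
      exact fun q hq => Or.inl (one_sub_mul_pos (hball hq.1) hq.2).ne'
  refine (intervalIntegral.hasDerivAt_integral_of_dominated_loc_of_deriv_le
    (F := fun χ s => g s * (1 - χ * s) ^ p * betaWeight s)
    (F' := fun χ s => -p * s * g s * (1 - χ * s) ^ (p - 1) * betaWeight s)
    (bound := fun s => C * betaWeight s) (Metric.ball_mem_nhds χ₀ hr)
    ((eventually_lt_nhds hχ₀).mono fun χ hχ =>
      (intervalIntegrable_eulerIntegrand hg p hχ).def'.aestronglyMeasurable)
    (intervalIntegrable_eulerIntegrand hg p hχ₀)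
    (intervalIntegrable_eulerIntegrand (by fun_prop) (p - 1) hχ₀).def'.aestronglyMeasurable
    ?_ (intervalIntegrable_betaWeight.const_mul C) ?_).2
  · refine ae_of_all _ fun s hs χ hχ => ?_
    rw [uIoc_of_le zero_le_one] at hs
    have hw := betaWeight_nonneg hs.1.le hs.2
    rw [norm_mul, norm_of_nonneg hw]
    exact mul_le_mul_of_nonneg_right
      (hC (χ, s) ⟨Metric.ball_subset_closedBall hχ, Ioc_subset_Icc_self hs⟩) hw
  · refine ae_of_all _ fun s hs χ hχ => ?_
    rw [uIoc_of_le zero_le_one] at hs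
    have hpos := one_sub_mul_pos (hball (Metric.ball_subset_closedBall hχ)) (Ioc_subset_Icc_self hs)
    have hinner : HasDerivAt (fun χ : ℝ => 1 - χ * s) (-s) χ := by
      simpa using ((hasDerivAt_id χ).mul_const s).const_sub 1
    exact (((hinner.rpow_const (p := p) (Or.inl hpos.ne')).const_mul (g s)).mul_const
      (betaWeight s)).congr_deriv (by ring)

lemma deriv_eulerIntegral_eventuallyEq {g : ℝ → ℝ} (hg : Continuous g) (p : ℝ) {χ : ℝ}
    (hχ : χ < 1) :
    deriv (eulerIntegral g p) =ᶠ[𝓝 χ] eulerIntegral (fun s => -p * s * g s) (p - 1) :=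
  (eventually_lt_nhds hχ).mono fun _ hx => (hasDerivAt_eulerIntegral hg p hx).deriv

lemma contDiffOn_eulerIntegral {g : ℝ → ℝ} (hg : Continuous g) (p : ℝ) :
    ContDiffOn ℝ ∞ (eulerIntegral g p) (Iio 1) := by
  refine contDiffOn_infty.2 fun n => ?_
  induction n generalizing g p with
  | zero =>
    exact contDiffOn_zero.2 fun x hx =>
      (hasDerivAt_eulerIntegral hg p hx).continuousAt.continuousWithinAt
  | succ n ih =>
    rw [Nat.cast_succ, contDiffOn_succ_iff_deriv_of_isOpen isOpen_Iio]
    refine ⟨fun x hx => (hasDerivAt_eulerIntegral hg p hx).differentiableAt.differentiableWithinAt,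
      by simp, ?_⟩
    exact (ih (g := fun s => -p * s * g s) (by fun_prop) (p - 1)).congr fun x hx =>
      (hasDerivAt_eulerIntegral hg p hx).deriv

lemma Bint_eq_rpow_mul_eulerF {χ : ℝ} (hχ : 0 < χ) : Bint χ = χ ^ (1/2 : ℝ) * eulerF χ := by
  set f : ℝ → ℝ := fun ζ => ζ ^ (1/2 : ℝ) * (ζ - 1 + χ) ^ (-(1/4) : ℝ) * (1 - ζ) ^ (-(1/4) : ℝ)
  have hsubst : ∫ s in (0:ℝ)..1, f (1 - χ * s) = χ⁻¹ * Bint χ := by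
    rw [intervalIntegral.integral_comp_sub_mul f hχ.ne', smul_eq_mul, Bint]
    norm_num [f]
  have hpoint : ∀ s ∈ [[(0:ℝ), 1]],
      f (1 - χ * s) = χ ^ (-(1/2) : ℝ) * (1 * (1 - χ * s) ^ (1/2 : ℝ) * betaWeight s) := by
    intro s hs
    rw [uIcc_of_le zero_le_one] at hs
    have hsplit : χ ^ (-(1/2) : ℝ) = χ ^ (-(1/4) : ℝ) * χ ^ (-(1/4) : ℝ) := by
      rw [← rpow_add hχ]; norm_num
    simp only [f, betaWeight, show 1 - χ * s - 1 + χ = χ * (1 - s) by ring,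
      show 1 - (1 - χ * s) = χ * s by ring, mul_rpow hχ.le (sub_nonneg.2 hs.2),
      mul_rpow hχ.le hs.1, hsplit]
    ring
  have hhalf : χ * χ ^ (-(1/2) : ℝ) = χ ^ (1/2 : ℝ) := by
    rw [← rpow_one_add' hχ.le (by norm_num)]; norm_num
  rw [eulerF, eulerIntegral, ← hhalf, mul_assoc, ← intervalIntegral.integral_const_mul,
    ← intervalIntegral.integral_congr hpoint, hsubst, mul_inv_cancel_left₀ hχ.ne']

lemma deriv_eulerF {χ : ℝ} (hχ : χ < 1) :
    deriv eulerF χ = eulerIntegral (fun s => -(1/2) * s) (-(1/2)) χ := by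
  rw [eulerF]
  convert (hasDerivAt_eulerIntegral (g := fun _ => 1) continuous_const (1/2) hχ).deriv
    using 2 <;> norm_num

lemma deriv_deriv_eulerF {χ : ℝ} (hχ : χ < 1) :
    deriv (deriv eulerF) χ = eulerIntegral (fun s => -(1/4) * s ^ 2) (-(3/2)) χ := by
  rw [eulerF, (deriv_eulerIntegral_eventuallyEq continuous_const _ hχ).deriv_eq]
  convert (hasDerivAt_eulerIntegral (g := fun s => -(1/2) * s * 1) (by fun_prop) _ hχ).deriv
    using 2
  · ext s; ring
  · norm_num

lemma hasDerivAt_eulerF_ode_primitive {χ s : ℝ} (hs0 : 0 < s) (hs1 : s < 1)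
    (hχs : 0 < 1 - χ * s) :
    HasDerivAt (fun x => x ^ (3/4 : ℝ) * (1 - x) ^ (3/4 : ℝ) * (1 - χ * x) ^ (-(1/2) : ℝ) / 2)
      (χ * (1 - χ) * (-(1/4) * s ^ 2 * (1 - χ * s) ^ (-(3/2) : ℝ) * betaWeight s)
        + (3/2 - 5/4 * χ) * (-(1/2) * s * (1 - χ * s) ^ (-(1/2) : ℝ) * betaWeight s)
        + 3/8 * (1 * (1 - χ * s) ^ (1/2 : ℝ) * betaWeight s)) s := by
  have hs1' : 0 < 1 - s := by linarith
  have d1 := (hasDerivAt_id s).rpow_const (p := 3/4) (Or.inl hs0.ne')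
  have d2 := ((hasDerivAt_id s).const_sub 1).rpow_const (p := 3/4) (Or.inl hs1'.ne')
  have d3 := (((hasDerivAt_id s).const_mul χ).const_sub 1).rpow_const (p := -(1/2))
    (Or.inl hχs.ne')
  refine (((d1.mul d2).mul d3).div_const 2).congr_deriv ?_
  have e1 {x : ℝ} (hx : 0 < x) : x ^ (3/4 : ℝ) = x ^ (-(1/4) : ℝ) * x := by
    rw [← rpow_add_one hx.ne']; norm_num
  have e2 (x : ℝ) : x ^ (3/4 - 1 : ℝ) = x ^ (-(1/4) : ℝ) := by norm_num
  have e3 : (1 - χ * s) ^ (-(1/2) : ℝ) = (1 - χ * s) ^ (-(3/2) : ℝ) * (1 - χ * s) := by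
    rw [← rpow_add_one hχs.ne']; norm_num
  have e4 : (1 - χ * s) ^ (1/2 : ℝ) = (1 - χ * s) ^ (-(1/2) : ℝ) * (1 - χ * s) := by
    rw [← rpow_add_one hχs.ne']; norm_num
  have e5 : (1 - χ * s) ^ (-(1/2) - 1 : ℝ) = (1 - χ * s) ^ (-(3/2) : ℝ) := by norm_num
  simp only [id, Pi.mul_apply, betaWeight, e1 hs0, e1 hs1', e2, e4, e5]
  rw [e3]
  ring

lemma eulerF_ode {χ : ℝ} (hχ : χ < 1) :
    χ * (1 - χ) * deriv (deriv eulerF) χ + (3/2 - 5/4 * χ) * deriv eulerF χ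
      + 3/8 * eulerF χ = 0 := by
  have hint {g : ℝ → ℝ} (hg : Continuous g) (p c : ℝ) :=
    (intervalIntegrable_eulerIntegrand hg p hχ).const_mul c
  have i2 := hint (g := fun s => -(1/4) * s ^ 2) (by fun_prop) (-(3/2)) (χ * (1 - χ))
  have i1 := hint (g := fun s => -(1/2) * s) (by fun_prop) (-(1/2)) (3/2 - 5/4 * χ)
  have i0 := hint (g := fun _ => 1) (by fun_prop) (1/2) (3/8)
  have hprim_cont : ContinuousOn
      (fun x => x ^ (3/4 : ℝ) * (1 - x) ^ (3/4 : ℝ) * (1 - χ * x) ^ (-(1/2) : ℝ) / 2)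
      (Icc 0 1) := by
    refine ContinuousOn.div_const (ContinuousOn.mul (ContinuousOn.mul ?_ ?_) ?_) 2
    · exact continuousOn_id.rpow_const fun _ _ => Or.inr (by norm_num)
    · exact (continuousOn_const.sub continuousOn_id).rpow_const fun _ _ => Or.inr (by norm_num)
    · exact (continuousOn_const.sub (continuousOn_const.mul continuousOn_id)).rpow_const
        fun s hs => Or.inl (one_sub_mul_pos hχ hs).ne'
  rw [deriv_deriv_eulerF hχ, deriv_eulerF hχ, eulerF]
  simp only [eulerIntegral]
  rw [← intervalIntegral.integral_const_mul, ← intervalIntegral.integral_const_mul,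
    ← intervalIntegral.integral_const_mul, ← intervalIntegral.integral_add i2 i1,
    ← intervalIntegral.integral_add (i2.add i1) i0,
    intervalIntegral.integral_eq_sub_of_hasDeriv_right_of_le zero_le_one hprim_cont
      (fun s ⟨hs0, hs1⟩ => (hasDerivAt_eulerF_ode_primitive hs0 hs1
        (one_sub_mul_pos hχ ⟨hs0.le, hs1.le⟩)).hasDerivWithinAt) ((i2.add i1).add i0)]
  norm_num

lemma sub_div_sub_mem_Ioo {b c d : ℝ} (hbc : b < c) (hcd : c < d) :
    (d - c) / (d - b) ∈ Ioo (0:ℝ) 1 :=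
  ⟨div_pos (by linarith) (by linarith), (div_lt_one (by linarith)).2 (by linarith)⟩

def HasChiProfile (m : ℝ → ℝ → ℝ → ℝ) (F : ℝ → ℝ) : Prop :=
  ∀ b c d, b < c → c < d → m b c d = (d - c) ^ (-(1/2) : ℝ) * F ((d - c) / (d - b))

namespace HasChiProfile

variable {m : ℝ → ℝ → ℝ → ℝ} {F : ℝ → ℝ} {b c d : ℝ}

lemma hasDerivAt_c (hm : HasChiProfile m F) {F' : ℝ} (hbc : b < c) (hcd : c < d)
    (hF : HasDerivAt F F' ((d - c) / (d - b))) :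
    HasDerivAt (fun t => m b t d)
      ((d - c) ^ (-(1/2) : ℝ) * (F ((d - c) / (d - b)) / (2 * (d - c)) - F' / (d - b))) c := by
  have hev : (fun t => m b t d) =ᶠ[𝓝 c] fun t => (d - t) ^ (-(1/2) : ℝ) * F ((d - t) / (d - b)) :=
    eventually_of_mem (Ioo_mem_nhds hbc hcd) fun t ht => hm b t d ht.1 ht.2
  have hdc : d - c ≠ 0 := by linarith
  have hdb : d - b ≠ 0 := by linarith
  refine ((((hasDerivAt_id c).const_sub d).rpow_const (p := -(1/2)) (Or.inl hdc)).mul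
    (hF.comp c (((hasDerivAt_id c).const_sub d).div_const (d - b)))).congr_of_eventuallyEq hev
    |>.congr_deriv ?_
  simp only [Function.comp_apply, id, rpow_sub_one hdc]
  field_simp
  ring

lemma hasDerivAt_d (hm : HasChiProfile m F) {F' : ℝ} (hbc : b < c) (hcd : c < d)
    (hF : HasDerivAt F F' ((d - c) / (d - b))) :
    HasDerivAt (fun t => m b c t)
      ((d - c) ^ (-(1/2) : ℝ) *
        (F' * (c - b) / (d - b) ^ 2 - F ((d - c) / (d - b)) / (2 * (d - c)))) d := by
  have hev : (fun t => m b c t) =ᶠ[𝓝 d] fun t => (t - c) ^ (-(1/2) : ℝ) * F ((t - c) / (t - b)) :=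
    eventually_of_mem (Ioi_mem_nhds hcd) fun t ht => hm b c t hbc ht
  have hdc : d - c ≠ 0 := by linarith
  have hdb : d - b ≠ 0 := by linarith
  refine ((((hasDerivAt_id d).sub_const c).rpow_const (p := -(1/2)) (Or.inl hdc)).mul
    (hF.comp d (((hasDerivAt_id d).sub_const c).div ((hasDerivAt_id d).sub_const b) hdb)))
    |>.congr_of_eventuallyEq hev |>.congr_deriv ?_
  simp only [Function.comp_apply, Pi.div_apply, id, rpow_sub_one hdc]
  field_simp
  ring

lemma hasDerivAt_b (hm : HasChiProfile m F) {F' : ℝ} (hbc : b < c) (hcd : c < d)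
    (hF : HasDerivAt F F' ((d - c) / (d - b))) :
    HasDerivAt (fun t => m t c d) ((d - c) ^ (-(1/2) : ℝ) * F' * ((d - c) / (d - b) ^ 2)) b := by
  have hev : (fun t => m t c d) =ᶠ[𝓝 b] fun t => (d - c) ^ (-(1/2) : ℝ) * F ((d - c) / (d - t)) :=
    eventually_of_mem (Iio_mem_nhds hbc) fun t ht => hm t c d ht hcd
  have hdb : d - b ≠ 0 := by linarith
  have hχ := (hasDerivAt_const b (d - c)).div ((hasDerivAt_id b).const_sub d) hdb
  refine ((hF.comp b hχ).const_mul _).congr_of_eventuallyEq hev |>.congr_deriv ?_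
  simp only [id]
  field_simp
  ring

lemma hasDerivAt_deriv_b (hm : HasChiProfile m F) {F' : ℝ → ℝ}
    (hF : ∀ x ∈ Ioo (0:ℝ) 1, HasDerivAt F (F' x) x) {F'' : ℝ} (hbc : b < c) (hcd : c < d)
    (hF' : HasDerivAt F' F'' ((d - c) / (d - b))) :
    HasDerivAt (deriv fun t => m t c d) ((d - c) ^ (-(1/2) : ℝ) *
      (F'' * (d - c) ^ 2 / (d - b) ^ 4 + 2 * F' ((d - c) / (d - b)) * (d - c) / (d - b) ^ 3))
      b := by
  have hev : (deriv fun t => m t c d) =ᶠ[𝓝 b]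
      fun t => (d - c) ^ (-(1/2) : ℝ) * F' ((d - c) / (d - t)) * ((d - c) / (d - t) ^ 2) :=
    eventually_of_mem (Iio_mem_nhds hbc) fun t ht =>
      (hm.hasDerivAt_b ht hcd (hF _ (sub_div_sub_mem_Ioo ht hcd))).deriv
  have hdb : d - b ≠ 0 := by linarith
  have hχ := (hasDerivAt_const b (d - c)).div ((hasDerivAt_id b).const_sub d) hdb
  refine (((hF'.comp b hχ).const_mul _).mul ((hasDerivAt_const b (d - c)).div
    (((hasDerivAt_id b).const_sub d).pow 2) (pow_ne_zero 2 hdb))).congr_of_eventuallyEq hev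
    |>.congr_deriv ?_
  simp only [Function.comp_apply, Pi.div_apply, Pi.pow_apply, id]
  field_simp
  ring

lemma contDiffOn {n : WithTop ℕ∞} (hm : HasChiProfile m F) (hF : ContDiffOn ℝ n F (Ioo 0 1)) :
    ContDiffOn ℝ n (fun p : ℝ × ℝ × ℝ => m p.1 p.2.1 p.2.2)
      {p : ℝ × ℝ × ℝ | p.1 < p.2.1 ∧ p.2.1 < p.2.2} := by
  refine ContDiffOn.congr (fun p ⟨hbc, hcd⟩ => ContDiffAt.contDiffWithinAt ?_)
    fun p hp => hm _ _ _ hp.1 hp.2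
  have hdc : p.2.2 - p.2.1 ≠ 0 := by linarith
  have hdb : p.2.2 - p.1 ≠ 0 := by linarith
  have hχ : ContDiffAt ℝ n (fun q : ℝ × ℝ × ℝ => (q.2.2 - q.2.1) / (q.2.2 - q.1)) p :=
    ((contDiff_snd.snd.sub contDiff_snd.fst).contDiffAt).div
      ((contDiff_snd.snd.sub contDiff_fst).contDiffAt) hdb
  obtain ⟨hχ0, hχ1⟩ := sub_div_sub_mem_Ioo hbc hcd
  exact ((contDiffAt_rpow_const_of_ne hdc).comp p
    (contDiff_snd.snd.sub contDiff_snd.fst).contDiffAt).mul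
    ((hF.contDiffAt (Ioo_mem_nhds hχ0 hχ1)).comp p hχ)

theorem pde (hm : HasChiProfile m F) (hF : ContDiffOn ℝ 2 F (Ioo 0 1))
    (hode : ∀ x ∈ Ioo (0:ℝ) 1,
      x * (1 - x) * deriv (deriv F) x + (3/2 - 5/4 * x) * deriv F x + 3/8 * F x = 0)
    (hbc : b < c) (hcd : c < d) :
    -(1 / (d - b) ^ 2) * m b c d
      + (2 / (c - b)) * deriv (fun t => m b t d) c
      + (2 / (d - b)) * deriv (fun t => m b c t) d
      - (8 / 3) * (1 / (b - c)) * deriv (fun t => m t c d) b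
      + (8 / 3) * deriv (deriv (fun t => m t c d)) b = 0 := by
  obtain ⟨hF_diff, -, hF'⟩ := (contDiffOn_succ_iff_deriv_of_isOpen (n := 1) isOpen_Ioo).1 hF
  have hF1 : ∀ x ∈ Ioo (0:ℝ) 1, HasDerivAt F (deriv F x) x := fun x hx =>
    ((hF_diff x hx).differentiableAt (isOpen_Ioo.mem_nhds hx)).hasDerivAt
  have hF2 : ∀ x ∈ Ioo (0:ℝ) 1, HasDerivAt (deriv F) (deriv (deriv F) x) x := fun x hx =>
    ((hF'.differentiableOn one_ne_zero x hx).differentiableAt (isOpen_Ioo.mem_nhds hx)).hasDerivAt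
  have hχ := sub_div_sub_mem_Ioo hbc hcd
  rw [(hm.hasDerivAt_c hbc hcd (hF1 _ hχ)).deriv, (hm.hasDerivAt_d hbc hcd (hF1 _ hχ)).deriv,
    (hm.hasDerivAt_b hbc hcd (hF1 _ hχ)).deriv,
    (hm.hasDerivAt_deriv_b hF1 hbc hcd (hF2 _ hχ)).deriv, hm b c d hbc hcd]
  have hdb : d - b ≠ 0 := by linarith
  have hdc : d - c ≠ 0 := by linarith
  have hcb : c - b ≠ 0 := by linarith
  have hbc' : b - c ≠ 0 := by linarith
  linear_combination (norm := skip)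
    (8/3 * (d - c) ^ (-(1/2) : ℝ) * (d - c) / ((d - b) ^ 2 * (c - b))) * hode _ hχ
  field_simp
  ring

end HasChiProfile

lemma mB_hasChiProfile : HasChiProfile mB eulerF := fun b c d hbc hcd => by
  have hχ := (sub_div_sub_mem_Ioo hbc hcd).1
  rw [mB, Bint_eq_rpow_mul_eulerF hχ, ← mul_assoc, mul_assoc _ _ (_ ^ _), ← rpow_add hχ]
  norm_num

/-- On Ω = {b < c < d}, the function m(b,c,d) is twice continuously
differentiable and satisfies
−(1/(d−b)²)·m + (2/(c−b))·∂m/∂c + (2/(d−b))·∂m/∂d − (8/3)·(1/(b−c))·∂m/∂b + (8/3)·∂²m/∂b² = 0. -/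
theorem stmt9 :
    ContDiffOn ℝ 2 (fun p : ℝ × ℝ × ℝ => mB p.1 p.2.1 p.2.2)
      {p : ℝ × ℝ × ℝ | p.1 < p.2.1 ∧ p.2.1 < p.2.2} ∧
    ∀ b c d : ℝ, b < c → c < d →
      -(1 / (d - b) ^ 2) * mB b c d
        + (2 / (c - b)) * deriv (fun t => mB b t d) c
        + (2 / (d - b)) * deriv (fun t => mB b c t) d
        - (8 / 3) * (1 / (b - c)) * deriv (fun t => mB t c d) b
        + (8 / 3) * deriv (deriv (fun t => mB t c d)) b = 0 := by
  have hF : ContDiffOn ℝ 2 eulerF (Ioo 0 1) :=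
    (contDiffOn_infty.1 (contDiffOn_eulerIntegral continuous_const _) 2).mono Ioo_subset_Iio_self
  exact ⟨mB_hasChiProfile.contDiffOn hF, fun b c d hbc hcd =>
    mB_hasChiProfile.pde hF (fun x hx => eulerF_ode hx.2) hbc hcd⟩
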